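/- arXiv:1902.08796 — 2 statements merged into one kernel-verified Lean document; each statement's English description precedes it below -/
import Mathlib

section
/- Let ω₁, ω₂, ω₃ be the component 1-forms of ω = dt + Im⟨z,dz⟩ on 𝓜 = ℝ³ × ℝ^{4n}, and ξ₁, ξ₂, ξ₃ the vector fields induced by the solvable actions ρ₁, ρ₂, ρ₃. Then ω₁(ξ₁) = ω₂(ξ₂) = ω₃(ξ₃) = 1 + a|z|², where |z|² = x₁² + ⋯ + x_{4n}². -/
noncomputable section

/- We identify `𝓜 = ℝ³ × ℝ^{4n}`, writing the `ℝ^{4n}`-coordinates as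
`x : Fin n → Fin 4 → ℝ`, where `x k 0, x k 1, x k 2, x k 3` stand for
`x_{4k-3}, x_{4k-2}, x_{4k-1}, x_{4k}`. -/

/-- `ω₁ = dt₁ + Σₖ (x_{4k-3}dx_{4k-2} - x_{4k-2}dx_{4k-3} + x_{4k}dx_{4k-1} - x_{4k-1}dx_{4k})`. -/
def omega1 {n : ℕ} (x : Fin n → Fin 4 → ℝ)
    (v : (Fin 3 → ℝ) × (Fin n → Fin 4 → ℝ)) : ℝ :=
  v.1 0 + ∑ k, (x k 0 * v.2 k 1 - x k 1 * v.2 k 0 + x k 3 * v.2 k 2 - x k 2 * v.2 k 3)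

/-- `ω₂ = dt₂ + Σₖ (x_{4k-3}dx_{4k-1} - x_{4k-1}dx_{4k-3} + x_{4k-2}dx_{4k} - x_{4k}dx_{4k-2})`. -/
def omega2 {n : ℕ} (x : Fin n → Fin 4 → ℝ)
    (v : (Fin 3 → ℝ) × (Fin n → Fin 4 → ℝ)) : ℝ :=
  v.1 1 + ∑ k, (x k 0 * v.2 k 2 - x k 2 * v.2 k 0 + x k 1 * v.2 k 3 - x k 3 * v.2 k 1)

/-- `ω₃ = dt₃ + Σₖ (x_{4k-3}dx_{4k} - x_{4k}dx_{4k-3} + x_{4k-1}dx_{4k-2} - x_{4k-2}dx_{4k-1})`. -/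
def omega3 {n : ℕ} (x : Fin n → Fin 4 → ℝ)
    (v : (Fin 3 → ℝ) × (Fin n → Fin 4 → ℝ)) : ℝ :=
  v.1 2 + ∑ k, (x k 0 * v.2 k 3 - x k 3 * v.2 k 0 + x k 2 * v.2 k 1 - x k 1 * v.2 k 2)

/-- The vector field `ξ₁` (eq. (2.6) of the paper) at the point `(s,x)`. -/
def xi1 {n : ℕ} (a : ℝ) (s : Fin 3 → ℝ) (x : Fin n → Fin 4 → ℝ) :
    (Fin 3 → ℝ) × (Fin n → Fin 4 → ℝ) :=
  (![1, 2 * a * s 2, -(2 * a * s 1)],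
    fun k => ![-(a * x k 1), a * x k 0, a * x k 3, -(a * x k 2)])

/-- The vector field `ξ₂` (eq. (2.10) of the paper) at the point `(s,x)`. -/
def xi2 {n : ℕ} (a : ℝ) (s : Fin 3 → ℝ) (x : Fin n → Fin 4 → ℝ) :
    (Fin 3 → ℝ) × (Fin n → Fin 4 → ℝ) :=
  (![-(2 * a * s 2), 1, 2 * a * s 0],
    fun k => ![-(a * x k 2), -(a * x k 3), a * x k 0, a * x k 1])

/-- The vector field `ξ₃` (eq. (2.11) of the paper) at the point `(s,x)`. -/
def xi3 {n : ℕ} (a : ℝ) (s : Fin 3 → ℝ) (x : Fin n → Fin 4 → ℝ) :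
    (Fin 3 → ℝ) × (Fin n → Fin 4 → ℝ) :=
  (![2 * a * s 1, -(2 * a * s 0), 1],
    fun k => ![-(a * x k 3), a * x k 2, -(a * x k 1), a * x k 0])

/-- `ω₁(ξ₁) = ω₂(ξ₂) = ω₃(ξ₃) = 1 + a|z|²` where `|z|² = x₁² + ⋯ + x_{4n}²`. -/
theorem omega_xi_uniform (n : ℕ) (a : ℝ) (ha : 0 < a)
    (s : Fin 3 → ℝ) (x : Fin n → Fin 4 → ℝ) :
    omega1 x (xi1 a s x) = 1 + a * ∑ k, ∑ i, x k i ^ 2 ∧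
    omega2 x (xi2 a s x) = 1 + a * ∑ k, ∑ i, x k i ^ 2 ∧
    omega3 x (xi3 a s x) = 1 + a * ∑ k, ∑ i, x k i ^ 2 := by
  refine ⟨?_, ?_, ?_⟩ <;>
  · simp only [omega1, omega2, omega3, xi1, xi2, xi3, Fin.sum_univ_four,
      Matrix.cons_val_zero, Matrix.cons_val_one, Matrix.head_cons,
      Matrix.cons_val_two, Matrix.tail_cons, Matrix.cons_val_three,
      Finset.mul_sum, ← Finset.sum_add_distrib]
    congr 1
    apply Finset.sum_congr rfl
    intro k _
    ring
end
end

section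
/- Let (a_{αβ}) ∈ SO(3), D a vector space with bilinear forms dη₁,dη₂,dη₃ and endomorphisms J₁,J₂,J₃ satisfying the reciprocity dη₁(J₁X,Y) = dη₂(J₂X,Y) = dη₃(J₃X,Y). Suppose a linear map h: D → D satisfies (dη_α)(hX, hY) = Σ_γ a_{γα} dη_γ(X,Y) and h J_β = Σ_γ a_{βγ} J_γ h. Then dη₁(J₁ hX, hY) = dη₁(J₁ X, Y), i.e. the 2-form dη₁ ∘ J₁ is preserved. -/
noncomputable section

/-- Let `(a_{αβ}) ∈ SO(3)`, `D` a vector space with bilinear forms `dη₁,dη₂,dη₃`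
and endomorphisms `J₁,J₂,J₃` satisfying the reciprocity
`dη₁(J₁X,Y) = dη₂(J₂X,Y) = dη₃(J₃X,Y)`.  If a linear map `h : D → D` satisfies
`dη_α(hX,hY) = Σ_γ a_{γα} dη_γ(X,Y)` and `h J_β = Σ_γ a_{βγ} J_γ h`, then
`dη₁(J₁ hX, hY) = dη₁(J₁ X, Y)`, i.e. the 2-form `dη₁ ∘ J₁` is preserved. -/
theorem deta_J_preserved
    (D : Type*) [AddCommGroup D] [Module ℝ D]
    (a : Matrix (Fin 3) (Fin 3) ℝ)
    (ha : a.transpose * a = 1 ∧ a.det = 1)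
    (B : Fin 3 → LinearMap.BilinForm ℝ D)
    (J : Fin 3 → D →ₗ[ℝ] D)
    (h : D →ₗ[ℝ] D)
    (hrec : ∀ X Y, B 0 (J 0 X) Y = B 1 (J 1 X) Y ∧ B 1 (J 1 X) Y = B 2 (J 2 X) Y)
    (hB : ∀ (α : Fin 3) X Y, (B α) (h X) (h Y) = ∑ γ : Fin 3, a γ α * (B γ) X Y)
    (hJ : ∀ (β : Fin 3) X, h ((J β) X) = ∑ γ : Fin 3, a β γ • (J γ) (h X)) :
    ∀ X Y, B 0 ((J 0) (h X)) (h Y) = B 0 ((J 0) X) Y := by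
  intro X Y
  have haat : a * a.transpose = 1 := mul_eq_one_comm.mp ha.1
  have horth : ∀ i j, (∑ α : Fin 3, a i α * a j α) = if i = j then 1 else 0 := by
    intro i j
    have := congrFun (congrFun haat i) j
    simpa [Matrix.mul_apply, Matrix.transpose_apply, Matrix.one_apply] using this
  have horthT : ∀ i j, (∑ α : Fin 3, a α i * a α j) = if i = j then 1 else 0 := by
    intro i j
    have := congrFun (congrFun ha.1 i) j
    simpa [Matrix.mul_apply, Matrix.transpose_apply, Matrix.one_apply] using this
  have hc : ∀ (γ : Fin 3) (Z : D), J γ (h Z) = ∑ β : Fin 3, a β γ • h (J β Z) := by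
    intro γ Z
    have : (∑ β : Fin 3, a β γ • h (J β Z))
        = ∑ δ : Fin 3, (∑ β : Fin 3, a β γ * a β δ) • J δ (h Z) := by
      simp only [hJ, Finset.smul_sum, smul_smul, Finset.sum_smul]
      rw [Finset.sum_comm]
    rw [this]
    simp [horthT γ]
  have expand : ∀ α : Fin 3, B α (J α (h X)) (h Y)
      = ∑ β : Fin 3, ∑ γ : Fin 3, a β α * (a γ α * B γ (J β X) Y) := by
    intro α
    rw [hc α X]
    simp [map_sum, LinearMap.sum_apply, LinearMap.map_smul, LinearMap.smul_apply,
      hB, Finset.mul_sum, smul_eq_mul]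
  have r1 := (hrec X Y).1
  have r2 := (hrec X Y).2
  have s1 := (hrec (h X) (h Y)).1
  have s2 := (hrec (h X) (h Y)).2
  have e0 := expand 0
  have e1 := expand 1
  have e2 := expand 2
  simp only [Fin.sum_univ_three] at e0 e1 e2
  have o00 := horth 0 0; have o01 := horth 0 1; have o02 := horth 0 2
  have o11 := horth 1 1; have o12 := horth 1 2; have o22 := horth 2 2
  have o10 := horth 1 0; have o20 := horth 2 0; have o21 := horth 2 1
  simp only [Fin.sum_univ_three] at o00 o01 o02 o11 o12 o22 o10 o20 o21
  norm_num [Fin.ext_iff] at o00 o01 o02 o11 o12 o22 o10 o20 o21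
  linear_combination (e0 + e1 + e2 + 2*s1 + s2 - 2*r1 - r2
    + (B 0 (J 0 X) Y) * o00 + (B 1 (J 0 X) Y) * o01 + (B 2 (J 0 X) Y) * o02
    + (B 0 (J 1 X) Y) * o10 + (B 1 (J 1 X) Y) * o11 + (B 2 (J 1 X) Y) * o12
    + (B 0 (J 2 X) Y) * o20 + (B 1 (J 2 X) Y) * o21 + (B 2 (J 2 X) Y) * o22) / 3
end
end
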